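/- Let P be a poset on [n], E an equivalence relation on I(P) with dual relation E*, 𝔽_q a finite field, and χ a nontrivial additive character of 𝔽_q. Let I, J be order ideals of P, and assume: (a) Σ_{v ∈ S_{J̄^c,E*}} χ(u·v) has the same value for all u ∈ S_{Ī,E}; (b) Σ_{u ∈ S_{Ī,E}} χ(u·v) has the same value for all v ∈ S_{J̄^c,E*}; (c) every order ideal L with (L,I) ∈ E satisfies |M(L)| = |M(I)| and |L_M| = |I_M|; (d) every order ideal K with (K,J) ∈ E satisfies |M(K^c)| = |M(J^c)| and |(K^c)_M| = |(J^c)_M|. Let N_I = #{L ∈ I(P) : (L,I) ∈ E} and N_J = #{K ∈ I(P) : (K,J) ∈ E}. Then for any u ∈ S_{Ī,E} and v ∈ S_{J̄^c,E*}: N_I · (q−1)^{|M(I)|} q^{|I_M|} · Σ_{v' ∈ S_{J̄^c,E*}} χ(u·v') = N_J · (q−1)^{|M(J^c)|} q^{|(J^c)_M|} · Σ_{u' ∈ S_{Ī,E}} χ(u'·v). (Proposition 3.10.) -/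

import Mathlib

/-!
Double counting: summing `χ (u' · v')` over `S_{Ī,E} × S_{J̄^c,E*}` in either order, hypotheses
(a) and (b) give `|S_{Ī,E}| · Σ_{v'} χ(u · v') = |S_{J̄^c,E*}| · Σ_{u'} χ(u' · v)`. The sphere
`S_L` of an order ideal `L` consists of the vectors that are nonzero on `M(L)`, arbitrary on `L_M`
and zero off `L`, so `|S_L| = (q-1)^{|M(L)|} q^{|L_M|}`; `S_{Ī,E}` is the disjoint union of the
`S_L` with `(L,I) ∈ E`, which by (c) all have this size for `L = I`, and dually for
`S_{J̄^c,E*}` using (d).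
-/

open scoped BigOperators
open Finset

noncomputable section
open scoped Classical

/-- `I ⊆ [n]` is an order ideal with respect to the order relation `le`. -/
def IsIdeal {n : ℕ} (le : Fin n → Fin n → Prop) (I : Finset (Fin n)) : Prop :=
  ∀ a ∈ I, ∀ b, le b a → b ∈ I

/-- `⟨X⟩_P` : the smallest order ideal (w.r.t. `le`) containing `X`. -/
def idealCl {n : ℕ} (le : Fin n → Fin n → Prop) (X : Finset (Fin n)) : Finset (Fin n) :=
  Finset.univ.filter fun b => ∃ a ∈ X, le b a

/-- `M(A)` : the set of maximal elements of `A` with respect to `le`. -/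
def maxSet {n : ℕ} (le : Fin n → Fin n → Prop) (A : Finset (Fin n)) : Finset (Fin n) :=
  A.filter fun a => ∀ b ∈ A, le a b → b = a

/-- `E` is an equivalence relation on the set of order ideals of the poset `le`. -/
def EqvOnIdeals {n : ℕ} (le : Fin n → Fin n → Prop)
    (E : Finset (Fin n) → Finset (Fin n) → Prop) : Prop :=
  (∀ I J, E I J → IsIdeal le I ∧ IsIdeal le J) ∧
  (∀ I, IsIdeal le I → E I I) ∧
  (∀ I J, E I J → E J I) ∧
  (∀ I J K, E I J → E J K → E I K)

/-- support of a vector -/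
def supp {n : ℕ} {F : Type} [Field F] [Fintype F] (v : Fin n → F) : Finset (Fin n) :=
  Finset.univ.filter fun i => v i ≠ 0

/-- standard dot product -/
def dot {n : ℕ} {F : Type} [Field F] [Fintype F] (u v : Fin n → F) : F := ∑ i, u i * v i

/-- the sphere `S_I = {v : ⟨supp v⟩_P = I}` -/
def sph {n : ℕ} (F : Type) [Field F] [Fintype F] (le : Fin n → Fin n → Prop)
    (I : Finset (Fin n)) : Finset (Fin n → F) :=
  Finset.univ.filter fun v => idealCl le (supp v) = I

/-- the dual sphere `S_{J^c} = {v : ⟨supp v⟩_{P*} = J^c}` -/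
def sphD {n : ℕ} (F : Type) [Field F] [Fintype F] (le : Fin n → Fin n → Prop)
    (J : Finset (Fin n)) : Finset (Fin n → F) :=
  Finset.univ.filter fun v => idealCl (fun a b => le b a) (supp v) = Jᶜ

/-- the `E`-sphere `S_{Ī,E} = {v : (⟨supp v⟩_P, I) ∈ E}` -/
def sphE {n : ℕ} (F : Type) [Field F] [Fintype F] (le : Fin n → Fin n → Prop)
    (E : Finset (Fin n) → Finset (Fin n) → Prop) (I : Finset (Fin n)) :
    Finset (Fin n → F) :=
  Finset.univ.filter fun v => E (idealCl le (supp v)) I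

/-- the `E*`-sphere `S_{J̄^c,E*} = {v : ⟨supp v⟩_{P*} = K^c for some ideal K with (K,J) ∈ E}` -/
def sphED {n : ℕ} (F : Type) [Field F] [Fintype F] (le : Fin n → Fin n → Prop)
    (E : Finset (Fin n) → Finset (Fin n) → Prop) (J : Finset (Fin n)) :
    Finset (Fin n → F) :=
  Finset.univ.filter fun v =>
    ∃ K, IsIdeal le K ∧ E K J ∧ idealCl (fun a b => le b a) (supp v) = Kᶜ

/-- the dual code `C^⊥` -/
def dualCode {n : ℕ} {F : Type} [Field F] [Fintype F] (C : Submodule F (Fin n → F)) :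
    Submodule F (Fin n → F) where
  carrier := {u | ∀ v ∈ C, dot u v = 0}
  zero_mem' := by intro v hv; simp [dot]
  add_mem' := by
    intro a b ha hb v hv
    have h1 := ha v hv
    have h2 := hb v hv
    simp only [dot, Pi.add_apply] at *
    simp [add_mul, Finset.sum_add_distrib, h1, h2]
  smul_mem' := by
    intro c a ha v hv
    have h1 := ha v hv
    simp only [dot, Pi.smul_apply, smul_eq_mul] at *
    simp [mul_assoc, ← Finset.mul_sum, h1]

/-- `A_{Ī,E}(C) = |C ∩ S_{Ī,E}|` -/
def AE {n : ℕ} {F : Type} [Field F] [Fintype F] (le : Fin n → Fin n → Prop)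
    (E : Finset (Fin n) → Finset (Fin n) → Prop)
    (C : Submodule F (Fin n → F)) (I : Finset (Fin n)) : ℕ :=
  ((sphE F le E I).filter fun v => v ∈ C).card

/-- `A_{J̄^c,E*}(D) = |D ∩ S_{J̄^c,E*}|` -/
def AED {n : ℕ} {F : Type} [Field F] [Fintype F] (le : Fin n → Fin n → Prop)
    (E : Finset (Fin n) → Finset (Fin n) → Prop)
    (D : Submodule F (Fin n → F)) (J : Finset (Fin n)) : ℕ :=
  ((sphED F le E J).filter fun v => v ∈ D).card

/-- `E` is a MacWilliams-type equivalence relation (w.r.t. the field `F`). -/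
def IsMacWilliamsType {n : ℕ} (F : Type) [Field F] [Fintype F]
    (le : Fin n → Fin n → Prop) (E : Finset (Fin n) → Finset (Fin n) → Prop) : Prop :=
  ∀ C₁ C₂ : Submodule F (Fin n → F),
    (∀ I, IsIdeal le I → AE le E C₁ I = AE le E C₂ I) →
    ∀ J, IsIdeal le J → AED le E (dualCode C₁) J = AED le E (dualCode C₂) J

/-- a hierarchical poset (ordinal sum of antichains) -/
def IsHierarchical {n : ℕ} (le : Fin n → Fin n → Prop) : Prop :=
  ∃ l : Fin n → ℕ, ∀ i j, (le i j ∧ i ≠ j) ↔ l i < l j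

/-- `σ` is an automorphism of the poset `le`. -/
def IsAut {n : ℕ} (le : Fin n → Fin n → Prop) (σ : Equiv.Perm (Fin n)) : Prop :=
  ∀ x y, le x y ↔ le (σ x) (σ y)

/-- `A` and `B` are order-isomorphic with the induced orders. -/
def OrdIso {n : ℕ} (le : Fin n → Fin n → Prop) (A B : Finset (Fin n)) : Prop :=
  ∃ e : {x // x ∈ A} ≃ {x // x ∈ B}, ∀ a b : {x // x ∈ A}, le ↑a ↑b ↔ le ↑(e a) ↑(e b)

theorem Finset.card_nsmul_sum_eq_card_nsmul_sum {α β M : Type*} [AddCommMonoid M]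
    {S : Finset α} {T : Finset β} {f : α → β → M}
    (hS : ∀ s ∈ S, ∀ s' ∈ S, ∑ t ∈ T, f s t = ∑ t ∈ T, f s' t)
    (hT : ∀ t ∈ T, ∀ t' ∈ T, ∑ s ∈ S, f s t = ∑ s ∈ S, f s t')
    {s : α} (hs : s ∈ S) {t : β} (ht : t ∈ T) :
    #S • ∑ t' ∈ T, f s t' = #T • ∑ s' ∈ S, f s' t :=
  calc #S • ∑ t' ∈ T, f s t'
      = ∑ s' ∈ S, ∑ t' ∈ T, f s' t' := by
        rw [sum_congr rfl fun s' hs' => hS s' hs' s hs, sum_const]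
    _ = ∑ t' ∈ T, ∑ s' ∈ S, f s' t' := sum_comm
    _ = #T • ∑ s' ∈ S, f s' t := by
        rw [sum_congr rfl fun t' ht' => hT t' ht' t ht, sum_const]

theorem maxSet_subset {n : ℕ} (le : Fin n → Fin n → Prop) (L : Finset (Fin n)) :
    maxSet le L ⊆ L :=
  filter_subset _ _

theorem isIdeal_compl {n : ℕ} {le : Fin n → Fin n → Prop} {K : Finset (Fin n)}
    (hK : IsIdeal le K) : IsIdeal (fun a b => le b a) Kᶜ := by
  intro a ha b hab
  exact mem_compl.2 fun hb => mem_compl.1 ha (hK b hb a hab)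

section Poset

variable {n : ℕ} (le : Fin n → Fin n → Prop) [IsPartialOrder (Fin n) le]

theorem exists_mem_maxSet_le {L : Finset (Fin n)} {a : Fin n} (ha : a ∈ L) :
    ∃ m ∈ maxSet le L, le a m := by
  -- a maximal element is found by maximizing the size of the down-set over the elements above `a`
  let down : Fin n → Finset (Fin n) := fun b => univ.filter (le · b)
  obtain ⟨m, hm, hmax⟩ := (L.filter (le a ·)).exists_max_image (fun b => #(down b))
    ⟨a, mem_filter.2 ⟨ha, refl_of le a⟩⟩
  obtain ⟨hmL, ham⟩ := mem_filter.1 hm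
  refine ⟨m, mem_filter.2 ⟨hmL, fun b hb hmb => ?_⟩, ham⟩
  have hsub : down m ⊆ down b := fun c hc => by
    simp only [down, mem_filter, mem_univ, true_and] at hc ⊢
    exact trans_of le hc hmb
  have hdown : down m = down b :=
    eq_of_subset_of_card_le hsub (hmax b (mem_filter.2 ⟨hb, trans_of le ham hmb⟩))
  have hbm : b ∈ down m := hdown ▸ mem_filter.2 ⟨mem_univ b, refl_of le b⟩
  exact antisymm_of le (mem_filter.1 hbm).2 hmb

theorem isIdeal_idealCl (X : Finset (Fin n)) : IsIdeal le (idealCl le X) := by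
  intro a ha b hba
  obtain ⟨x, hx, hax⟩ := (mem_filter.1 ha).2
  exact mem_filter.2 ⟨mem_univ b, x, hx, trans_of le hba hax⟩

theorem idealCl_eq_iff {L : Finset (Fin n)} (hL : IsIdeal le L) (X : Finset (Fin n)) :
    idealCl le X = L ↔ maxSet le L ⊆ X ∧ X ⊆ L := by
  constructor
  · rintro rfl
    have hX : X ⊆ idealCl le X := fun x hx => mem_filter.2 ⟨mem_univ x, x, hx, refl_of le x⟩
    refine ⟨fun m hm => ?_, hX⟩
    obtain ⟨x, hx, hmx⟩ := (mem_filter.1 (maxSet_subset le _ hm)).2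
    exact (mem_filter.1 hm).2 x (hX hx) hmx ▸ hx
  · rintro ⟨hMX, hXL⟩
    refine Subset.antisymm (fun b hb => ?_) (fun b hb => ?_)
    · obtain ⟨x, hx, hbx⟩ := (mem_filter.1 hb).2
      exact hL x (hXL hx) b hbx
    · obtain ⟨m, hm, hbm⟩ := exists_mem_maxSet_le le hb
      exact mem_filter.2 ⟨mem_univ b, m, hMX hm, hbm⟩

variable (F : Type) [Field F] [Fintype F]

theorem sph_eq_piFinset {L : Finset (Fin n)} (hL : IsIdeal le L) :
    sph F le L = Fintype.piFinset fun i =>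
      if i ∈ maxSet le L then ({0}ᶜ : Finset F) else if i ∈ L then univ else {0} := by
  ext v
  simp only [sph, mem_filter, mem_univ, true_and, idealCl_eq_iff le hL, Fintype.mem_piFinset,
    subset_iff, supp]
  rw [← forall_and]
  refine forall_congr' fun i => ?_
  by_cases hM : i ∈ maxSet le L
  · simp [hM, maxSet_subset le L hM]
  · by_cases hiL : i ∈ L <;> simp [hM, hiL]

theorem card_sph {L : Finset (Fin n)} (hL : IsIdeal le L) :
    #(sph F le L) =
      (Fintype.card F - 1) ^ #(maxSet le L) * Fintype.card F ^ #(L \ maxSet le L) := by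
  rw [sph_eq_piFinset le F hL, Fintype.card_piFinset]
  simp only [apply_ite Finset.card, card_compl, card_singleton, card_univ]
  rw [prod_ite, prod_ite]
  simp only [prod_const, one_pow, mul_one]
  congr 3 <;> ext <;> simp [and_comm]

variable (E : Finset (Fin n) → Finset (Fin n) → Prop)

theorem card_sphE (I : Finset (Fin n))
    (hc : ∀ L, E L I →
      #(maxSet le L) = #(maxSet le I) ∧ #(L \ maxSet le L) = #(I \ maxSet le I)) :
    #(sphE F le E I) = #(univ.filter fun L => IsIdeal le L ∧ E L I) *
      ((Fintype.card F - 1) ^ #(maxSet le I) * Fintype.card F ^ #(I \ maxSet le I)) := by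
  have hmaps : Set.MapsTo (fun v => idealCl le (supp v)) (sphE F le E I : Set (Fin n → F))
      (univ.filter fun L => IsIdeal le L ∧ E L I) :=
    fun v hv => mem_filter.2 ⟨mem_univ _, isIdeal_idealCl le _, (mem_filter.1 (mem_coe.1 hv)).2⟩
  rw [card_eq_sum_card_fiberwise hmaps, ← smul_eq_mul, ← sum_const]
  refine sum_congr rfl fun L hL => ?_
  obtain ⟨hLideal, hLI⟩ := (mem_filter.1 hL).2
  have hfiber : {v ∈ sphE F le E I | idealCl le (supp v) = L} = sph F le L := by
    ext v
    simp only [sphE, sph, mem_filter, mem_univ, true_and, and_iff_right_iff_imp]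
    exact fun h => h ▸ hLI
  rw [hfiber, card_sph le F hLideal, (hc L hLI).1, (hc L hLI).2]

theorem card_sphED (J : Finset (Fin n))
    (hd : ∀ K, E K J →
      #(maxSet (fun a b => le b a) Kᶜ) = #(maxSet (fun a b => le b a) Jᶜ) ∧
      #(Kᶜ \ maxSet (fun a b => le b a) Kᶜ) = #(Jᶜ \ maxSet (fun a b => le b a) Jᶜ)) :
    #(sphED F le E J) = #(univ.filter fun K => IsIdeal le K ∧ E K J) *
      ((Fintype.card F - 1) ^ #(maxSet (fun a b => le b a) Jᶜ) *
        Fintype.card F ^ #(Jᶜ \ maxSet (fun a b => le b a) Jᶜ)) := by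
  have hmaps : Set.MapsTo (fun v => (idealCl (fun a b => le b a) (supp v))ᶜ)
      (sphED F le E J : Set (Fin n → F)) (univ.filter fun K => IsIdeal le K ∧ E K J) := by
    intro v hv
    obtain ⟨K, hK, hKJ, hcl⟩ := (mem_filter.1 (mem_coe.1 hv)).2
    exact mem_filter.2 ⟨mem_univ _, by simpa [hcl] using And.intro hK hKJ⟩
  rw [card_eq_sum_card_fiberwise hmaps, ← smul_eq_mul, ← sum_const]
  refine sum_congr rfl fun K hK => ?_
  obtain ⟨hKideal, hKJ⟩ := (mem_filter.1 hK).2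
  have hfiber : {v ∈ sphED F le E J | (idealCl (fun a b => le b a) (supp v))ᶜ = K} =
      sph F (fun a b => le b a) Kᶜ := by
    ext v
    simp only [sphED, sph, mem_filter, mem_univ, true_and, compl_eq_comm (x := idealCl _ _)]
    exact ⟨fun h => h.2.symm, fun h => ⟨⟨K, hKideal, hKJ, h⟩, h.symm⟩⟩
  rw [hfiber, card_sph _ F (isIdeal_compl hKideal), (hd K hKJ).1, (hd K hKJ).2]

end Poset

theorem stmt_12_general {n : ℕ} (le : Fin n → Fin n → Prop)
    [IsPartialOrder (Fin n) le]
    (E : Finset (Fin n) → Finset (Fin n) → Prop)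
    (F : Type) [Field F] [Fintype F] (χ : AddChar F ℂ)
    (I J : Finset (Fin n))
    (ha : ∀ u ∈ sphE F le E I, ∀ u' ∈ sphE F le E I,
      ∑ v ∈ sphED F le E J, χ (dot u v) = ∑ v ∈ sphED F le E J, χ (dot u' v))
    (hb : ∀ v ∈ sphED F le E J, ∀ v' ∈ sphED F le E J,
      ∑ u ∈ sphE F le E I, χ (dot u v) = ∑ u ∈ sphE F le E I, χ (dot u v'))
    (hc : ∀ L : Finset (Fin n), E L I →
      (maxSet le L).card = (maxSet le I).card ∧
      (L \ maxSet le L).card = (I \ maxSet le I).card)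
    (hd : ∀ K : Finset (Fin n), E K J →
      (maxSet (fun a b => le b a) Kᶜ).card = (maxSet (fun a b => le b a) Jᶜ).card ∧
      (Kᶜ \ maxSet (fun a b => le b a) Kᶜ).card = (Jᶜ \ maxSet (fun a b => le b a) Jᶜ).card) :
    ∀ u ∈ sphE F le E I, ∀ v ∈ sphED F le E J,
      ((Finset.univ.filter fun L : Finset (Fin n) => IsIdeal le L ∧ E L I).card : ℂ) *
        ((Fintype.card F : ℂ) - 1) ^ (maxSet le I).card *
        (Fintype.card F : ℂ) ^ (I \ maxSet le I).card *
        ∑ v' ∈ sphED F le E J, χ (dot u v') =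
      ((Finset.univ.filter fun K : Finset (Fin n) => IsIdeal le K ∧ E K J).card : ℂ) *
        ((Fintype.card F : ℂ) - 1) ^ (maxSet (fun a b => le b a) Jᶜ).card *
        (Fintype.card F : ℂ) ^ (Jᶜ \ maxSet (fun a b => le b a) Jᶜ).card *
        ∑ u' ∈ sphE F le E I, χ (dot u' v) := by
  intro u hu v hv
  have hdouble := card_nsmul_sum_eq_card_nsmul_sum ha hb hu hv
  rw [nsmul_eq_mul, nsmul_eq_mul, card_sphE le F E I hc, card_sphED le F E J hd] at hdouble
  push_cast [Nat.cast_sub Fintype.card_pos] at hdouble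
  simpa only [mul_assoc] using hdouble

/-- Proposition 3.10: the relation between the entries `p_{J̄^c,Ī}` and `q_{Ī,J̄^c}`. -/
theorem stmt_12 {n : ℕ} (hn : 0 < n) (le : Fin n → Fin n → Prop)
    [IsPartialOrder (Fin n) le]
    (E : Finset (Fin n) → Finset (Fin n) → Prop) (hE : EqvOnIdeals le E)
    (F : Type) [Field F] [Fintype F] (χ : AddChar F ℂ) (hχ : ∃ a, χ a ≠ 1)
    (I J : Finset (Fin n)) (hI : IsIdeal le I) (hJ : IsIdeal le J)
    (ha : ∀ u ∈ sphE F le E I, ∀ u' ∈ sphE F le E I,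
      ∑ v ∈ sphED F le E J, χ (dot u v) = ∑ v ∈ sphED F le E J, χ (dot u' v))
    (hb : ∀ v ∈ sphED F le E J, ∀ v' ∈ sphED F le E J,
      ∑ u ∈ sphE F le E I, χ (dot u v) = ∑ u ∈ sphE F le E I, χ (dot u v'))
    (hc : ∀ L : Finset (Fin n), E L I →
      (maxSet le L).card = (maxSet le I).card ∧
      (L \ maxSet le L).card = (I \ maxSet le I).card)
    (hd : ∀ K : Finset (Fin n), E K J →
      (maxSet (fun a b => le b a) Kᶜ).card = (maxSet (fun a b => le b a) Jᶜ).card ∧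
      (Kᶜ \ maxSet (fun a b => le b a) Kᶜ).card = (Jᶜ \ maxSet (fun a b => le b a) Jᶜ).card) :
    ∀ u ∈ sphE F le E I, ∀ v ∈ sphED F le E J,
      ((Finset.univ.filter fun L : Finset (Fin n) => IsIdeal le L ∧ E L I).card : ℂ) *
        ((Fintype.card F : ℂ) - 1) ^ (maxSet le I).card *
        (Fintype.card F : ℂ) ^ (I \ maxSet le I).card *
        ∑ v' ∈ sphED F le E J, χ (dot u v') =
      ((Finset.univ.filter fun K : Finset (Fin n) => IsIdeal le K ∧ E K J).card : ℂ) *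
        ((Fintype.card F : ℂ) - 1) ^ (maxSet (fun a b => le b a) Jᶜ).card *
        (Fintype.card F : ℂ) ^ (Jᶜ \ maxSet (fun a b => le b a) Jᶜ).card *
        ∑ u' ∈ sphE F le E I, χ (dot u' v) :=
  stmt_12_general le E F χ I J ha hb hc hd

end
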